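/- arXiv:2107.05128 — 6 statements merged into one kernel-verified Lean document; each statement's English description precedes it below -/
import Mathlib

section
/- For any n ≥ 1 and any string α ∈ {0,u,1}^n of selector values, the string αα' ∈ {0,u,1}^{n+2^n}, where α' ∈ {u,1}^{2^n} has 1s exactly at positions indexed by resolutions of α and u elsewhere, is a prime implicant of MUX_n; moreover it is the unique prime implicant of MUX_n whose selector part equals α. -/
/-- Ternary values: `none` is the unstable value `u`. -/
abbrev TVal := Option Bool

/-- `a` is a resolution of `α`: it agrees with `α` on all stable coordinates. -/
def isRes {ι : Type*} (α : ι → TVal) (a : ι → Bool) : Prop :=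
  ∀ i b, α i = some b → a i = b

/-- The hazard-free extension of a Boolean function. -/
noncomputable def hfe {ι : Type*} (f : (ι → Bool) → Bool) (α : ι → TVal) : TVal := by
  classical
  exact if ∀ a, isRes α a → f a = true then some true
    else if ∀ a, isRes α a → f a = false then some false
    else none

/-- `β` is below `α` in the instability partial order (coordinatewise `u ≤ 0`, `u ≤ 1`). -/
def below {ι : Type*} (β α : ι → TVal) : Prop := ∀ i, β i = none ∨ β i = α i

/-- A prime implicant: an implicant minimal in the instability order. -/
def primeImplicant {ι : Type*} (f : (ι → Bool) → Bool) (α : ι → TVal) : Prop :=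
  hfe f α = some true ∧ ∀ β, below β α → hfe f β = some true → β = α

/-- A prime implicate: an implicate minimal in the instability order. -/
def primeImplicate {ι : Type*} (f : (ι → Bool) → Bool) (α : ι → TVal) : Prop :=
  hfe f α = some false ∧ ∀ β, below β α → hfe f β = some false → β = α

/-- The multiplexer function: data bits are indexed directly by selector strings. -/
def MUX (n : ℕ) (v : (Fin n ⊕ (Fin n → Bool)) → Bool) : Bool :=
  v (Sum.inr fun i => v (Sum.inl i))

/-- The extension of a selector string `α` by `1`s on the resolutions of `α`
and `u`s elsewhere. -/
noncomputable def muxPI (n : ℕ) (α : Fin n → TVal) : (Fin n ⊕ (Fin n → Bool)) → TVal := by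
  classical
  exact Sum.elim α fun a => if isRes α a then some true else none

/-- The extension of a selector string `α` by `0`s on the resolutions of `α`
and `u`s elsewhere. -/
noncomputable def muxPIm (n : ℕ) (α : Fin n → TVal) : (Fin n ⊕ (Fin n → Bool)) → TVal := by
  classical
  exact Sum.elim α fun a => if isRes α a then some false else none


/-!
A ternary string `β` is an implicant of `MUX_n` exactly when every resolution `s` of its selector
part has its data bit `β (inr s)` set to `1`: otherwise the resolution that reads `0` at `x_s`
refutes it. So `muxPI n α` is the least implicant with selector part `α`, and it is minimal,
since making a stable selector bit unstable creates a resolution whose data bit is `u`.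
-/

section Ternary

variable {ι : Type*}

lemma hfe_eq_some_true_iff {f : (ι → Bool) → Bool} {β : ι → TVal} :
    hfe f β = some true ↔ ∀ a, isRes β a → f a = true := by
  classical
  unfold hfe
  split_ifs <;> simp_all

lemma isRes_getD (β : ι → TVal) (a : ι → Bool) : isRes β fun i => (β i).getD (a i) := by
  intro i b hb
  simp [hb]

lemma getD_eq_of_isRes {β : ι → TVal} {a : ι → Bool} (ha : isRes β a) (i : ι) :
    (β i).getD (a i) = a i := by
  cases hβ : β i with
  | none => rfl
  | some b => simp [ha i b hβ]

lemma below_antisymm {β α : ι → TVal} (hβα : below β α) (hαβ : below α β) : β = α := by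
  funext i
  rcases hβα i with h | h
  · rcases hαβ i with h' | h'
    · rw [h, h']
    · exact h'.symm
  · exact h

lemma eq_of_below_of_isRes_imp {β α : ι → TVal} (hβα : below β α)
    (hres : ∀ a, isRes β a → isRes α a) : β = α := by
  funext j
  rcases hβα j with hj | hj
  · cases hα : α j with
    | none => exact hj
    | some b =>
      have := hres _ (isRes_getD β fun _ => !b) j b hα
      simp [hj] at this
  · exact hj

end Ternary

section Multiplexer

variable {n : ℕ}

@[simp]
lemma muxPI_inl (α : Fin n → TVal) (i : Fin n) : muxPI n α (Sum.inl i) = α i := rfl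

lemma muxPI_inr_of_isRes {α : Fin n → TVal} {a : Fin n → Bool} (ha : isRes α a) :
    muxPI n α (Sum.inr a) = some true := by
  simp [muxPI, ha]

lemma muxPI_inr_of_not_isRes {α : Fin n → TVal} {a : Fin n → Bool} (ha : ¬isRes α a) :
    muxPI n α (Sum.inr a) = none := by
  simp [muxPI, ha]

lemma hfe_MUX_eq_some_true_iff {β : (Fin n ⊕ (Fin n → Bool)) → TVal} :
    hfe (MUX n) β = some true ↔ ∀ s, isRes (β ∘ Sum.inl) s → β (Sum.inr s) = some true := by
  rw [hfe_eq_some_true_iff]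
  constructor
  · intro himp s hs
    by_contra hne
    -- resolve `β` along `s` on the selectors and with `x_s = 0` on the data bits
    have hw := isRes_getD β (Sum.elim s fun _ => false)
    have hsel : (fun i => (β (Sum.inl i)).getD (s i)) = s := funext (getD_eq_of_isRes hs)
    have := himp _ hw
    simp only [MUX, Sum.elim_inl, Sum.elim_inr, hsel] at this
    rcases h : β (Sum.inr s) with _ | _ | _ <;> simp_all
  · intro himp w hw
    have hsel : isRes (β ∘ Sum.inl) fun i => w (Sum.inl i) := fun i => hw (Sum.inl i)
    exact hw _ _ (himp _ hsel)

lemma hfe_MUX_muxPI (α : Fin n → TVal) : hfe (MUX n) (muxPI n α) = some true := by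
  rw [hfe_MUX_eq_some_true_iff]
  exact fun s hs => muxPI_inr_of_isRes hs

lemma below_muxPI_of_hfe_MUX {α : Fin n → TVal} {γ : (Fin n ⊕ (Fin n → Bool)) → TVal}
    (hsel : ∀ i, γ (Sum.inl i) = α i) (himp : hfe (MUX n) γ = some true) :
    below (muxPI n α) γ := by
  have hsel' : γ ∘ Sum.inl = α := funext hsel
  rw [hfe_MUX_eq_some_true_iff, hsel'] at himp
  rintro (i | a)
  · simp [hsel]
  · by_cases ha : isRes α a
    · exact Or.inr ((muxPI_inr_of_isRes ha).trans (himp a ha).symm)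
    · exact Or.inl (muxPI_inr_of_not_isRes ha)

lemma eq_muxPI_of_below_of_hfe_MUX {α : Fin n → TVal} {β : (Fin n ⊕ (Fin n → Bool)) → TVal}
    (hβ : below β (muxPI n α)) (himp : hfe (MUX n) β = some true) : β = muxPI n α := by
  have hsel : β ∘ Sum.inl = α := by
    refine eq_of_below_of_isRes_imp (fun i => hβ (Sum.inl i)) fun s hs => ?_
    have hs1 := hfe_MUX_eq_some_true_iff.mp himp s hs
    by_contra hα
    rcases hβ (Sum.inr s) with h | h <;> simp [h, muxPI_inr_of_not_isRes hα] at hs1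
  exact below_antisymm hβ (below_muxPI_of_hfe_MUX (congrFun hsel) himp)

end Multiplexer

theorem stmt2_general (n : ℕ) (α : Fin n → TVal) :
    primeImplicant (MUX n) (muxPI n α) ∧
    ∀ γ, primeImplicant (MUX n) γ → (∀ i, γ (Sum.inl i) = α i) → γ = muxPI n α := by
  refine ⟨⟨hfe_MUX_muxPI α, fun β hβ himp => eq_muxPI_of_below_of_hfe_MUX hβ himp⟩, ?_⟩
  rintro γ ⟨himp, hmin⟩ hsel
  exact (hmin _ (below_muxPI_of_hfe_MUX hsel himp) (hfe_MUX_muxPI α)).symm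

theorem stmt2 (n : ℕ) (hn : 1 ≤ n) (α : Fin n → TVal) :
    primeImplicant (MUX n) (muxPI n α) ∧
    ∀ γ, primeImplicant (MUX n) γ → (∀ i, γ (Sum.inl i) = α i) → γ = muxPI n α :=
  stmt2_general n α
end

section
/- The 3^n × 3^n real 0/1 matrix of the subcube-intersection function on {0,u,1}^n has full rank, i.e., rank 3^n over the reals, for all n ≥ 1. -/
/-- The communication matrix of the subcube-intersection problem:
entry `1` iff `α` and `β` have a common resolution. -/
noncomputable def subMat (n : ℕ) : Matrix (Fin n → TVal) (Fin n → TVal) ℝ := by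
  classical
  exact fun α β => if ∃ a, isRes α a ∧ isRes β a then 1 else 0

/-- The 3×3 matrix `[[1,1,0],[1,1,1],[0,1,1]]`, rows/columns indexed by `0, u, 1`. -/
def M1 : Matrix TVal TVal ℝ := fun t u =>
  match t, u with
  | some true, some false => 0
  | some false, some true => 0
  | _, _ => 1

/-! Two subcubes of `{0,1}^n` intersect iff they intersect in every coordinate, so the
intersection matrix is the `n`-th Kronecker power of `M1`. Since `A ↦ A^{⊗n}` is
multiplicative and `M1` is invertible, so is the intersection matrix. -/

namespace Matrix

variable {l m n R : Type*} [CommSemiring R]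

def kroneckerPow (ι : Type*) [Fintype ι] (A : Matrix m n R) : Matrix (ι → m) (ι → n) R :=
  of fun x y => ∏ i, A (x i) (y i)

variable {ι : Type*} [Fintype ι]

@[simp]
theorem kroneckerPow_apply (A : Matrix m n R) (x : ι → m) (y : ι → n) :
    kroneckerPow ι A x y = ∏ i, A (x i) (y i) :=
  rfl

theorem kroneckerPow_mul [DecidableEq ι] [Fintype m] (A : Matrix l m R) (B : Matrix m n R) :
    kroneckerPow ι A * kroneckerPow ι B = kroneckerPow ι (A * B) := by
  ext x z
  simp only [mul_apply, kroneckerPow_apply, ← Finset.prod_mul_distrib, Fintype.prod_sum]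

theorem kroneckerPow_one [DecidableEq m] : kroneckerPow ι (1 : Matrix m m R) = 1 := by
  ext x y
  simp only [kroneckerPow_apply, one_apply, Finset.prod_boole, Finset.mem_univ, true_implies,
    funext_iff]

variable (ι) in
def kroneckerPowHom [DecidableEq ι] [Fintype m] [DecidableEq m] :
    Matrix m m R →* Matrix (ι → m) (ι → m) R where
  toFun := kroneckerPow ι
  map_one' := kroneckerPow_one
  map_mul' A B := (kroneckerPow_mul A B).symm

theorem isUnit_kroneckerPow [DecidableEq ι] [Fintype m] [DecidableEq m] {A : Matrix m m R}
    (hA : IsUnit A) : IsUnit (kroneckerPow ι A) :=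
  hA.map (kroneckerPowHom ι)

end Matrix

open Matrix

def TVal.Resolves (s : TVal) (b : Bool) : Prop :=
  ∀ c, s = some c → b = c

theorem exists_isRes_and_isRes_iff {ι : Type*} (α β : ι → TVal) :
    (∃ a, isRes α a ∧ isRes β a) ↔ ∀ i, ∃ b, (α i).Resolves b ∧ (β i).Resolves b := by
  simp only [Classical.skolem, isRes, TVal.Resolves, forall_and]

open scoped Classical in
theorem M1_eq_ite (s t : TVal) :
    M1 s t = if ∃ b, s.Resolves b ∧ t.Resolves b then 1 else 0 := by
  rcases s with _ | _ | _ <;> rcases t with _ | _ | _ <;> simp [M1, TVal.Resolves]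

theorem subMat_eq_kroneckerPow (n : ℕ) : subMat n = kroneckerPow (Fin n) M1 := by
  classical
  ext α β
  simp only [subMat, kroneckerPow_apply, M1_eq_ite, Finset.prod_boole, Finset.mem_univ,
    true_implies, exists_isRes_and_isRes_iff]

def M1Inv : Matrix TVal TVal ℝ := fun t u =>
  match t, u with
  | some false, some false => 0
  | some false, none => 1
  | some false, some true => -1
  | none, some false => 1
  | none, none => -1
  | none, some true => 1
  | some true, some false => -1
  | some true, none => 1
  | some true, some true => 0

theorem M1_mul_M1Inv : M1 * M1Inv = 1 := by
  ext s t
  rcases s with _ | _ | _ <;> rcases t with _ | _ | _ <;>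
    simp [mul_apply, Fintype.sum_option, M1, M1Inv]

theorem isUnit_M1 : IsUnit M1 :=
  .of_mul_eq_one _ M1_mul_M1Inv

theorem stmt6_general (n : ℕ) : (subMat n).rank = 3 ^ n := by
  classical
  rw [subMat_eq_kroneckerPow, rank_of_isUnit _ (isUnit_kroneckerPow isUnit_M1)]
  simp

theorem stmt6 (n : ℕ) (hn : 1 ≤ n) : (subMat n).rank = 3 ^ n :=
  stmt6_general n
end

section
/- Let f be a monotone Boolean function on {0,1}^n. Then every prime implicant of f (with respect to the hazard-free extension) contains only values from {u,1}, and every prime implicate contains only values from {u,0}. -/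
/-!
For monotone `f`, turning a stable `0` of an implicant `α` into `u` gives again an implicant:
every new resolution `a` dominates `a[i := 0]`, a resolution of `α`, so
`f a ≥ f (a[i := 0]) = 1`.
A prime implicant therefore has no stable `0`; dually, a prime implicate has no stable `1`.
-/

section HazardFree

open Function

variable {ι : Type*}

lemma exists_isRes (α : ι → TVal) : ∃ a, isRes α a :=
  ⟨fun i => (α i).getD true, fun i b hb => by simp [hb]⟩

lemma hfe_eq_some_iff (f : (ι → Bool) → Bool) (α : ι → TVal) (b : Bool) :
    hfe f α = some b ↔ ∀ a, isRes α a → f a = b := by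
  unfold hfe
  cases b <;> split_ifs <;> simp_all [exists_isRes]

variable [DecidableEq ι]

lemma below_update_none (α : ι → TVal) (i : ι) : below (update α i none) α := fun j => by
  by_cases hj : j = i <;> simp [hj]

lemma isRes_update_of_isRes_update_none {α : ι → TVal} {a : ι → Bool} {i : ι} {c : Bool}
    (hα : α i = some c) (ha : isRes (update α i none) a) :
    isRes α (update a i c) := by
  intro j b hj
  by_cases hji : j = i
  · subst hji; simp_all
  · simpa [hji] using ha j b (by simpa [hji] using hj)

lemma hfe_update_none_of_forall {f : (ι → Bool) → Bool} {α : ι → TVal} {i : ι}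
    {b c : Bool} (hα : α i = some c) (hf : ∀ a, f (update a i c) = b → f a = b)
    (h : hfe f α = some b) : hfe f (update α i none) = some b := by
  rw [hfe_eq_some_iff] at h ⊢
  exact fun a ha => hf a (h _ (isRes_update_of_isRes_update_none hα ha))

lemma eq_none_of_minimal {f : (ι → Bool) → Bool} {α : ι → TVal} {b : Bool}
    (hmin : ∀ β, below β α → hfe f β = some b → β = α) {i : ι}
    (h : hfe f (update α i none) = some b) : α i = none := by
  simpa using (congrFun (hmin _ (below_update_none α i) h) i).symm

lemma ne_some_false_of_primeImplicant {f : (ι → Bool) → Bool} (hf : Monotone f)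
    {α : ι → TVal} (hα : primeImplicant f α) (i : ι) : α i ≠ some false := by
  intro hi
  have hforce : ∀ a, f (update a i false) = true → f a = true := fun a ha =>
    top_unique <| ha.ge.trans (hf (update_le_self_iff.2 (Bool.false_le _)))
  simp [eq_none_of_minimal hα.2 (hfe_update_none_of_forall hi hforce hα.1)] at hi

lemma ne_some_true_of_primeImplicate {f : (ι → Bool) → Bool} (hf : Monotone f)
    {β : ι → TVal} (hβ : primeImplicate f β) (i : ι) : β i ≠ some true := by
  intro hi
  have hforce : ∀ a, f (update a i true) = false → f a = false := fun a ha =>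
    bot_unique <| (hf (le_update_self_iff.2 (Bool.le_true _))).trans ha.le
  simp [eq_none_of_minimal hβ.2 (hfe_update_none_of_forall hi hforce hβ.1)] at hi

end HazardFree

theorem stmt9 {n : ℕ} (f : (Fin n → Bool) → Bool)
    (hf : ∀ a b : Fin n → Bool, (∀ i, a i ≤ b i) → f a ≤ f b) :
    (∀ α, primeImplicant f α → ∀ i, α i ≠ some false) ∧
    (∀ β, primeImplicate f β → ∀ i, β i ≠ some true) :=
  ⟨fun _ hα => ne_some_false_of_primeImplicant hf hα,
    fun _ hβ => ne_some_true_of_primeImplicate hf hβ⟩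
end

section
/- For all integers n ≥ 2, with t = ⌈log_2 n⌉ and Ψ(i) = ⌈log_2(2^i + n − i)⌉ − i, the inequality Σ_{i=0}^{t−1} C(n,i)·2^{Ψ(i)−1} + Σ_{i=t}^{n−1} C(n,i) + 1/2 ≤ 2^{n+1} holds. -/
/-! Since `2 ^ ⌈log₂ m⌉ < 2 m`, the weight `2 ^ (Ψ(i) - 1)` is below `(2 ^ i + n - i) / 2 ^ i =
1 + (n - i) / 2 ^ i`, and so is the weight `1` of the terms with `i ≥ t`. Summing over all `i ≤ n`,
with `C(n, i) (n - i) = n C(n - 1, i)` and the binomial theorem, the left side is at most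
`2 ^ n + n (3/2) ^ (n - 1) - 1/2`, and `n (3/2) ^ (n - 1) ≤ 2 ^ n`. -/

open Finset

theorem Nat.pow_clog_lt_mul_self {b m : ℕ} (hb : 1 < b) (hm : m ≠ 0) : b ^ clog b m < b * m := by
  rcases (Nat.one_le_iff_ne_zero.mpr hm).eq_or_lt with rfl | hm1
  · simpa [clog_one_right] using hb
  · have hpos := clog_pos hb hm1
    calc b ^ clog b m = b * b ^ (clog b m).pred := by
          rw [← pow_succ', Nat.succ_pred_eq_of_pos hpos]
      _ < b * m := Nat.mul_lt_mul_of_pos_left (pow_pred_clog_lt_self hb hm1) (by omega)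

theorem two_zpow_clog_sub_sub_one_le {m : ℕ} (i : ℕ) (hm : m ≠ 0) :
    (2 : ℚ) ^ ((Nat.clog 2 m : ℤ) - i - 1) ≤ m / 2 ^ i := by
  have h : ((2 ^ Nat.clog 2 m : ℕ) : ℚ) ≤ ((2 * m : ℕ) : ℚ) := by
    exact_mod_cast (Nat.pow_clog_lt_mul_self one_lt_two hm).le
  rw [sub_sub, zpow_sub₀ two_ne_zero, zpow_natCast, ← Nat.cast_succ, zpow_natCast, pow_succ,
    div_le_div_iff₀ (by positivity) (by positivity)]
  push_cast at h
  nlinarith [pow_pos (two_pos : (0 : ℚ) < 2) i]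

theorem sum_range_choose_mul_sub_div_two_pow (m : ℕ) :
    ∑ i ∈ range (m + 2), ((m + 1).choose i : ℚ) * ((m + 1 - i : ℕ) : ℚ) / 2 ^ i
      = (m + 1) * (3 / 2) ^ m := by
  have hterm (i : ℕ) : ((m + 1).choose i : ℚ) * ((m + 1 - i : ℕ) : ℚ) = m.choose i * (m + 1) := by
    exact_mod_cast (Nat.choose_mul_succ_eq m i).symm
  simp_rw [hterm, sum_range_succ _ (m + 1), Nat.choose_succ_self, Nat.cast_zero, zero_mul, zero_div,
    add_zero]
  rw [show (3 / 2 : ℚ) = 1 / 2 + 1 by norm_num, add_pow, mul_sum]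
  refine sum_congr rfl fun i _ => ?_
  simp only [one_pow, mul_one, one_div, inv_pow]
  ring

theorem succ_mul_three_halves_pow_le (m : ℕ) : (m + 1 : ℚ) * (3 / 2) ^ m ≤ 2 ^ (m + 1) := by
  induction m with
  | zero => norm_num
  | succ m ih =>
    rcases lt_or_ge m 2 with hm | hm
    · interval_cases m <;> norm_num
    · -- the step multiplies by `(3/2) (m + 2) / (m + 1)`, which is at most `2` only from `m = 2` on
      have hm' : (2 : ℚ) ≤ m := by exact_mod_cast hm
      have hpos : (0 : ℚ) < (3 / 2) ^ m := by positivity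
      push_cast
      rw [pow_succ, pow_succ]
      nlinarith

theorem sum_range_choose_mul_two_pow_add_sub_div_le (n : ℕ) :
    ∑ i ∈ range (n + 1), (n.choose i : ℚ) * (((2 ^ i + (n - i) : ℕ) : ℚ) / 2 ^ i) ≤ 2 ^ (n + 1) := by
  rcases n with _ | m
  · norm_num
  have hsplit (i : ℕ) : ((m + 1).choose i : ℚ) * (((2 ^ i + (m + 1 - i) : ℕ) : ℚ) / 2 ^ i)
      = (m + 1).choose i + ((m + 1).choose i : ℚ) * ((m + 1 - i : ℕ) : ℚ) / 2 ^ i := by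
    push_cast
    field_simp
  have hchoose : ∑ i ∈ range (m + 2), ((m + 1).choose i : ℚ) = 2 ^ (m + 1) := by
    exact_mod_cast Nat.sum_range_choose (m + 1)
  simp_rw [hsplit, sum_add_distrib, hchoose, sum_range_choose_mul_sub_div_two_pow]
  linarith [succ_mul_three_halves_pow_le m, pow_succ (2 : ℚ) (m + 1)]

theorem stmt15_general (n : ℕ) :
    ∑ i ∈ Finset.range (Nat.clog 2 n), (n.choose i : ℚ) *
        (2 : ℚ) ^ ((Nat.clog 2 (2 ^ i + (n - i)) : ℤ) - i - 1) +
      ∑ i ∈ Finset.Ico (Nat.clog 2 n) n, (n.choose i : ℚ) + 1 / 2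
      ≤ 2 ^ (n + 1) := by
  set w : ℕ → ℚ := fun i => (n.choose i : ℚ) * (((2 ^ i + (n - i) : ℕ) : ℚ) / 2 ^ i) with hw
  have hfirst (i : ℕ) :
      (n.choose i : ℚ) * (2 : ℚ) ^ ((Nat.clog 2 (2 ^ i + (n - i)) : ℤ) - i - 1) ≤ w i := by
    simp only [hw]
    gcongr
    exact two_zpow_clog_sub_sub_one_le i (by positivity)
  have hsecond (i : ℕ) : (n.choose i : ℚ) ≤ w i := by
    simp only [hw]
    refine le_mul_of_one_le_right (by positivity) ((one_le_div (by positivity)).mpr ?_)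
    exact_mod_cast Nat.le_add_right _ _
  have hlast : w n = 1 := by simp [hw]
  have hclog : Nat.clog 2 n ≤ n := Nat.clog_le_of_le_pow Nat.lt_two_pow_self.le
  calc _ ≤ ∑ i ∈ range (Nat.clog 2 n), w i + ∑ i ∈ Ico (Nat.clog 2 n) n, w i + 1 / 2 := by
        gcongr with i _ i _
        · exact hfirst i
        · exact hsecond i
    _ = ∑ i ∈ range (n + 1), w i - 1 / 2 := by
        rw [sum_range_add_sum_Ico _ hclog, sum_range_succ, hlast]; ring
    _ ≤ 2 ^ (n + 1) := by linarith [sum_range_choose_mul_two_pow_add_sub_div_le n]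

theorem stmt15 (n : ℕ) (hn : 2 ≤ n) :
    ∑ i ∈ Finset.range (Nat.clog 2 n), (n.choose i : ℚ) *
        (2 : ℚ) ^ ((Nat.clog 2 (2 ^ i + (n - i)) : ℤ) - i - 1) +
      ∑ i ∈ Finset.Ico (Nat.clog 2 n) n, (n.choose i : ℚ) + 1 / 2
      ≤ 2 ^ (n + 1) :=
  stmt15_general n
end

section
/- For all integers n ≥ 2, with Ψ(i) = ⌈log_2(2^i + n − i)⌉ − i, the inequality Σ_{i=0}^{n} C(n,i)·2^{n−i}·2^{Ψ(i)+i} > 2^{2n+1} holds; consequently, there is no prefix code assigning to each of the C(n,i)·2^{n−i} prime implicants with i selector u's a codeword of length at most (2n+1) − ⌈log_2(2^i + n − i)⌉, by Kraft's inequality. -/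
/-!
There are `C(n,i)·2^(n-i)` ternary vectors with exactly `i` entries `u`, and
`2^i < 2^i + (n - i)` forces `⌈log₂(2^i + n - i)⌉ ≥ i + 1` for `i < n`
(and `≥ 2` for `i = 0`, as `n ≥ 2`). Hence every layer `i < n` contributes at least
`C(n,i)·2^(n+1)`, the layer `i = 0` contributes `2^(n+1)` more, and the top layer `i = n`
only `2^n` less, so the weighted sum exceeds `2^(2n+1)`. A prefix code with the prescribed
lengths would contradict Kraft's inequality, which bounds that same sum by `2^(2n+1)`.
-/

open Finset

theorem kraft_inequality_of_prefixFree {β A : Type*} [Fintype β] [Fintype A]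
    (enc : β → List A) (L : ℕ) (hprefix : ∀ a b, a ≠ b → ¬ enc a <+: enc b)
    (hlen : ∀ b, (enc b).length ≤ L) :
    ∑ b, Fintype.card A ^ (L - (enc b).length) ≤ Fintype.card A ^ L := by
  -- padding each codeword in every possible way yields pairwise distinct words of length `L`
  let pad : (Σ b, Fin (L - (enc b).length) → A) → List.Vector A L :=
    fun x => ⟨enc x.1 ++ List.ofFn x.2, by simp [hlen x.1]⟩
  have hpad : Function.Injective pad := by
    rintro ⟨a, p⟩ ⟨b, q⟩ h
    have happ : enc a ++ List.ofFn p = enc b ++ List.ofFn q := congrArg Subtype.val h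
    obtain rfl : a = b := by
      by_contra hab
      rcases List.prefix_or_prefix_of_prefix (List.prefix_append (enc a) (List.ofFn p))
        (happ ▸ List.prefix_append (enc b) (List.ofFn q)) with hpre | hpre
      · exact hprefix a b hab hpre
      · exact hprefix b a (Ne.symm hab) hpre
    obtain rfl : p = q := List.ofFn_injective (List.append_cancel_left happ)
    rfl
  simpa [Fintype.card_sigma, Fintype.card_fun] using Fintype.card_le_of_injective pad hpad

section CountNone

variable {ι β : Type*} [Fintype ι] [DecidableEq ι] [Fintype β] [DecidableEq β]

theorem card_filter_filter_eq_none_eq (s : Finset ι) :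
    #{α : ι → Option β | univ.filter (α · = none) = s}
      = Fintype.card β ^ (Fintype.card ι - #s) := by
  have hpi : univ.filter (fun α : ι → Option β => univ.filter (α · = none) = s)
      = Fintype.piFinset fun j => if j ∈ s then {none} else {none}ᶜ := by
    ext α
    simp only [mem_filter, mem_univ, true_and, Fintype.mem_piFinset, Finset.ext_iff]
    refine forall_congr' fun j => ?_
    by_cases hj : j ∈ s <;> cases α j <;> simp [hj]
  rw [hpi, Fintype.card_piFinset]
  simp [apply_ite, prod_ite, card_compl, filter_not, card_univ_sdiff]

theorem card_filter_card_filter_eq_none_eq (i : ℕ) :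
    #{α : ι → Option β | #(univ.filter (α · = none)) = i}
      = (Fintype.card ι).choose i * Fintype.card β ^ (Fintype.card ι - i) := by
  rw [card_eq_sum_card_fiberwise (f := fun α : ι → Option β => univ.filter (α · = none))
      (t := powersetCard i univ) fun α hα => by simpa [mem_powersetCard_univ] using hα]
  have hfiber : ∀ s ∈ powersetCard i (univ : Finset ι),
      #{α ∈ {α : ι → Option β | #(univ.filter (α · = none)) = i} |
          univ.filter (α · = none) = s}
        = Fintype.card β ^ (Fintype.card ι - i) := by
    intro s hs
    rw [mem_powersetCard_univ] at hs
    rw [filter_filter, ← hs, ← card_filter_filter_eq_none_eq s]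
    congr 1
    exact filter_congr fun α _ => ⟨And.right, fun h => ⟨h ▸ rfl, h⟩⟩
  rw [sum_congr rfl hfiber, sum_const, card_powersetCard, card_univ, smul_eq_mul]

theorem sum_comp_card_filter_eq_none {M : Type*} [AddCommMonoid M] (g : ℕ → M) :
    ∑ α : ι → Option β, g #(univ.filter (α · = none))
      = ∑ i ∈ range (Fintype.card ι + 1),
          ((Fintype.card ι).choose i * Fintype.card β ^ (Fintype.card ι - i)) • g i := by
  rw [← sum_fiberwise_of_maps_to (g := fun α : ι → Option β => #(univ.filter (α · = none)))
      (t := range (Fintype.card ι + 1))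
      fun α _ => mem_range_succ_iff.2 (card_le_univ _)]
  refine sum_congr rfl fun i _ => ?_
  rw [sum_congr rfl fun α hα => congrArg g (mem_filter.1 hα).2, sum_const,
    card_filter_card_filter_eq_none_eq]

end CountNone

theorem lt_clog_two_pow_add {i k : ℕ} (hk : 0 < k) : i < Nat.clog 2 (2 ^ i + k) :=
  (Nat.lt_clog_iff_pow_lt one_lt_two).2 (by omega)

theorem clog_two_pow_add_le (i k : ℕ) : Nat.clog 2 (2 ^ i + k) ≤ i + k := by
  refine (Nat.clog_le_iff_le_pow one_lt_two).2 ?_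
  have hk : k + 1 ≤ 2 ^ k := Nat.lt_two_pow_self
  have hi : 1 ≤ 2 ^ i := Nat.one_le_two_pow
  calc 2 ^ i + k ≤ 2 ^ i * (k + 1) := by nlinarith
    _ ≤ 2 ^ i * 2 ^ k := Nat.mul_le_mul_left _ hk
    _ = 2 ^ (i + k) := (pow_add 2 i k).symm

theorem choose_mul_two_pow_succ_add_ite_le {n i : ℕ} (hn : 2 ≤ n) (hi : i ≤ n) :
    n.choose i * 2 ^ (n + 1) + (if i = 0 then 2 ^ (n + 1) else 0)
      ≤ n.choose i * 2 ^ (n - i) * 2 ^ Nat.clog 2 (2 ^ i + (n - i))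
        + (if i = n then 2 ^ n else 0) := by
  rcases hi.eq_or_lt with rfl | hlt
  · simp [Nat.clog_pow, show i ≠ 0 by omega, pow_succ, mul_two]
  rcases i.eq_zero_or_pos with rfl | hi0
  · have hclog : 2 ≤ Nat.clog 2 (2 ^ 0 + (n - 0)) :=
      (Nat.lt_clog_iff_pow_lt one_lt_two).2 (by simp; omega)
    simp only [Nat.choose_zero_right, Nat.sub_zero, if_neg hlt.ne, one_mul, add_zero]
    calc 2 ^ (n + 1) + 2 ^ (n + 1) = 2 ^ n * 2 ^ 2 := by ring
      _ ≤ 2 ^ n * 2 ^ Nat.clog 2 (2 ^ 0 + n) :=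
        Nat.mul_le_mul_left _ (Nat.pow_le_pow_right two_pos hclog)
  have hclog : i + 1 ≤ Nat.clog 2 (2 ^ i + (n - i)) := lt_clog_two_pow_add (by omega)
  have hlayer : 2 ^ (n + 1) ≤ 2 ^ (n - i) * 2 ^ Nat.clog 2 (2 ^ i + (n - i)) :=
    calc 2 ^ (n + 1) = 2 ^ (n - i) * 2 ^ (i + 1) := by rw [← pow_add]; congr 1; omega
      _ ≤ _ := Nat.mul_le_mul_left _ (Nat.pow_le_pow_right two_pos hclog)
  simp only [if_neg hi0.ne', if_neg hlt.ne, add_zero, mul_assoc]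
  exact Nat.mul_le_mul_left _ hlayer

theorem two_pow_lt_sum_choose_mul_two_pow_clog {n : ℕ} (hn : 2 ≤ n) :
    2 ^ (2 * n + 1) < ∑ i ∈ range (n + 1),
      n.choose i * 2 ^ (n - i) * 2 ^ Nat.clog 2 (2 ^ i + (n - i)) := by
  have h := sum_le_sum fun i hi =>
    choose_mul_two_pow_succ_add_ite_le hn (mem_range_succ_iff.1 hi)
  rw [sum_add_distrib, sum_add_distrib, ← sum_mul, Nat.sum_range_choose, sum_ite_eq',
    sum_ite_eq', if_pos (by simp), if_pos (by simp), Nat.succ_eq_add_one] at h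
  have hpow : 2 ^ (2 * n + 1) = 2 ^ n * 2 ^ (n + 1) := by rw [← pow_add]; ring_nf
  have : 2 ^ n < 2 ^ (n + 1) := Nat.pow_lt_pow_right one_lt_two n.lt_succ_self
  omega

theorem stmt16 (n : ℕ) (hn : 2 ≤ n) :
    (∑ i ∈ Finset.range (n + 1),
        n.choose i * 2 ^ (n - i) * 2 ^ (Nat.clog 2 (2 ^ i + (n - i)))
      > 2 ^ (2 * n + 1)) ∧
    ¬ ∃ enc : (Fin n → TVal) → List Bool,
        (∀ α β : Fin n → TVal, α ≠ β → ¬ (enc α <+: enc β)) ∧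
        ∀ α : Fin n → TVal,
          (enc α).length ≤ (2 * n + 1) -
            Nat.clog 2 (2 ^ ((Finset.univ.filter fun j : Fin n => α j = none).card)
              + (n - (Finset.univ.filter fun j : Fin n => α j = none).card)) := by
  refine ⟨two_pow_lt_sum_choose_mul_two_pow_clog hn, ?_⟩
  rintro ⟨enc, hprefix, hlen⟩
  have hkraft := kraft_inequality_of_prefixFree enc (2 * n + 1) hprefix
    fun α => (hlen α).trans (Nat.sub_le _ _)
  have hweight : ∀ α : Fin n → TVal,
      2 ^ Nat.clog 2 (2 ^ #(univ.filter (α · = none)) + (n - #(univ.filter (α · = none))))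
        ≤ 2 ^ (2 * n + 1 - (enc α).length) := by
    intro α
    have hu : #(univ.filter (α · = none)) ≤ n := (card_le_univ _).trans_eq (Fintype.card_fin n)
    -- the exponent is at most `n ≤ 2n+1`, so the truncated subtraction in `hlen` can be undone
    have hclog :=
      clog_two_pow_add_le #(univ.filter (α · = none)) (n - #(univ.filter (α · = none)))
    have hlenα := hlen α
    exact Nat.pow_le_pow_right two_pos (by omega)
  have hsum := (sum_le_sum fun α _ => hweight α).trans (by simpa using hkraft)
  rw [sum_comp_card_filter_eq_none (g := fun i => 2 ^ Nat.clog 2 (2 ^ i + (n - i)))] at hsum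
  simp only [Fintype.card_fin, Fintype.card_bool, smul_eq_mul] at hsum
  exact (two_pow_lt_sum_choose_mul_two_pow_clog hn).not_ge hsum
end

section
/- Fix any (s,x) ∈ {0,1}^{n+2^n}. The hazard derivative dMUX_n(s,x; t,y), viewed as a Boolean function of (t,y) ∈ {0,1}^{n+2^n}, is a monotone Boolean function: if (t,y) ≤ (t',y') coordinatewise and dMUX_n(s,x;t,y) = 1 then dMUX_n(s,x;t',y') = 1. -/
/-- `x ⊕ u·y`: the ternary string with coordinate `x i` where `y i = false`
and `u` where `y i = true`. -/
def mkU {ι : Type*} (x y : ι → Bool) : ι → TVal :=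
  fun i => if y i then none else some (x i)

theorem isRes_mkU_mono {ι : Type*} {x y y' : ι → Bool} (hy : ∀ i, y i ≤ y' i)
    {a : ι → Bool} (ha : isRes (mkU x y) a) : isRes (mkU x y') a := by
  intro i b hb
  have hy'i : y' i = false := by by_contra h; simp [mkU, h] at hb
  have hyi : y i = false := le_bot_iff.mp (hy'i ▸ hy i : y i ≤ false)
  exact ha i b (by simpa [mkU, hyi, hy'i] using hb)

theorem hfe_eq_none_iff {ι : Type*} (f : (ι → Bool) → Bool) (α : ι → TVal) :
    hfe f α = none ↔
      (∃ a, isRes α a ∧ f a = false) ∧ ∃ b, isRes α b ∧ f b = true := by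
  unfold hfe
  split_ifs with h1 h2
  · simp only [false_iff]
    rintro ⟨⟨a, ha, hfa⟩, -⟩
    simp [h1 a ha] at hfa
  · simp only [false_iff]
    rintro ⟨-, b, hb, hfb⟩
    simp [h2 b hb] at hfb
  · push Not at h1 h2
    simp only [true_iff]
    exact ⟨by simpa using h1, by simpa using h2⟩

theorem hfe_eq_none_mono {ι : Type*} {f : (ι → Bool) → Bool} {α β : ι → TVal}
    (hres : ∀ a, isRes α a → isRes β a) (h : hfe f α = none) : hfe f β = none := by
  obtain ⟨⟨a, ha, hfa⟩, b, hb, hfb⟩ := (hfe_eq_none_iff f α).mp h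
  exact (hfe_eq_none_iff f β).mpr ⟨⟨a, hres a ha, hfa⟩, b, hres b hb, hfb⟩

/-- Fix `(s,x)`. The hazard derivative `dMUX_n(s,x; ·, ·)` — which holds iff
`MUX_n` is non-constant on the resolutions of `(s,x) ⊕ u·(t,y)`, equivalently
`hfe (MUX n) (mkU w v) = none` — is a monotone Boolean function of `(t,y)`. -/
theorem stmt19 (n : ℕ) (w : (Fin n ⊕ (Fin n → Bool)) → Bool)
    (v v' : (Fin n ⊕ (Fin n → Bool)) → Bool)
    (hle : ∀ i, v i ≤ v' i)
    (h : hfe (MUX n) (mkU w v) = none) :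
    hfe (MUX n) (mkU w v') = none :=
  hfe_eq_none_mono (fun _ => isRes_mkU_mono hle) h
end
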